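/- arXiv:1310.3486 — 2 statements merged into one kernel-verified Lean document; each statement's English description precedes it below -/
import Mathlib

section
/- For any j with 1 ≤ j < D, if every collection node in subtree j receives at least 7 log n flags and forwards up to 14 log n excess flags uniformly at random to the 2^(D−j−1) collection nodes of subtree j+1, and the total number of forwarded flags is at least 14 log n · 2^(D−j−1), then with high probability every collection node of subtree j+1 receives at least 7 log n flags. -/
/-!
For a fixed destination `b`, the generating function of its load is explicit:
`∑ f, (1/2) ^ #f⁻¹(b) = (B - 1/2) ^ M`. Markov's inequality then bounds the number of
assignments giving `b` fewer than `7 log₂ n` flags by `2 ^ (7 log₂ n) (B - 1/2) ^ M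
≤ n⁷ B ^ M e ^ (-M / 2B) ≤ n⁷ B ^ M n ^ (-7 / ln 2)`, and `7 / ln 2 > 9`. A union bound over
the `B ≤ n` destinations leaves a failing fraction of at most `1 / n`.
-/

open Finset

theorem sub_pow_le_pow_mul_exp {y a : ℝ} (hy : 0 < y) (hay : a ≤ y) (m : ℕ) :
    (y - a) ^ m ≤ y ^ m * Real.exp (-(a * m / y)) := by
  have hbase : y - a ≤ y * Real.exp (-(a / y)) :=
    calc y - a = y * (1 - a / y) := by field_simp
      _ ≤ y * Real.exp (-(a / y)) := by gcongr; exact Real.one_sub_le_exp_neg _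
  calc (y - a) ^ m ≤ (y * Real.exp (-(a / y))) ^ m := pow_le_pow_left₀ (by linarith) hbase m
    _ = y ^ m * Real.exp (-(a * m / y)) := by
      rw [mul_pow, ← Real.exp_nat_mul]; ring_nf

theorem exp_mul_logb_two {n : ℝ} (hn : 0 < n) (c : ℝ) :
    Real.exp (c * Real.logb 2 n) = n ^ (c / Real.log 2) := by
  rw [Real.rpow_def_of_pos hn, Real.logb]; ring_nf

theorem half_rpow_mul_logb_two {n : ℝ} (hn : 0 < n) (k : ℕ) :
    (1 / 2 : ℝ) ^ (k * Real.logb 2 n) = (n ^ k)⁻¹ := by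
  rw [one_div, Real.inv_rpow zero_le_two, mul_comm, Real.rpow_mul zero_le_two,
    Real.rpow_logb zero_lt_two one_lt_two.ne' hn, Real.rpow_natCast]

theorem exp_neg_seven_mul_logb_two_le {n : ℝ} (hn : 1 ≤ n) :
    Real.exp (-(7 * Real.logb 2 n)) ≤ (n ^ 9)⁻¹ := by
  have hlog2 : 9 ≤ 7 / Real.log 2 := by
    rw [le_div_iff₀ (Real.log_pos one_lt_two)]
    linarith [Real.log_two_lt_d9]
  rw [← neg_mul, exp_mul_logb_two (by linarith), ← Real.rpow_natCast,
    ← Real.rpow_neg (by linarith), neg_div]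
  exact Real.rpow_le_rpow_of_exponent_le hn (by push_cast; linarith)

section FiberCount

variable {α β : Type*} [Fintype α] [Fintype β] [DecidableEq α] [DecidableEq β]

theorem sum_pow_card_fiber {R : Type*} [CommRing R] (b : β) (x : R) :
    ∑ f : α → β, x ^ #{i | f i = b} = (Fintype.card β - 1 + x) ^ Fintype.card α := by
  have hprod (f : α → β) : x ^ #{i | f i = b} = ∏ i, if f i = b then x else 1 := by
    rw [prod_ite, prod_const, prod_const_one, mul_one]
  have hsum : ∑ v : β, (if v = b then x else 1) = Fintype.card β - 1 + x := by
    have (v : β) : (if v = b then x else 1) = 1 + if v = b then x - 1 else 0 := by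
      split_ifs <;> ring
    simp only [this, sum_add_distrib, Fintype.sum_ite_eq', sum_const, card_univ, nsmul_one]
    ring
  simp_rw [hprod]
  rw [← Fintype.prod_sum (fun (_ : α) (v : β) => if v = b then x else 1), prod_const, hsum,
    card_univ]

theorem card_fiber_lt_mul_rpow_le (b : β) {x t : ℝ} (hx₀ : 0 < x) (hx₁ : x ≤ 1) :
    #{f : α → β | (#{i | f i = b} : ℝ) < t} * x ^ t
      ≤ (Fintype.card β - 1 + x) ^ Fintype.card α := by
  calc #{f : α → β | (#{i | f i = b} : ℝ) < t} * x ^ t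
      = ∑ f : α → β with (#{i | f i = b} : ℝ) < t, x ^ t := by rw [sum_const, nsmul_eq_mul]
    _ ≤ ∑ f : α → β with (#{i | f i = b} : ℝ) < t, x ^ #{i | f i = b} := by
      refine sum_le_sum fun f hf => ?_
      rw [← Real.rpow_natCast]
      exact Real.rpow_le_rpow_of_exponent_ge hx₀ hx₁ (mem_filter.1 hf).2.le
    _ ≤ ∑ f : α → β, x ^ #{i | f i = b} :=
      sum_le_sum_of_subset_of_nonneg (filter_subset _ _) fun _ _ _ => by positivity
    _ = _ := sum_pow_card_fiber b x

theorem card_exists_fiber_lt_mul_rpow_le {x t : ℝ} (hx₀ : 0 < x) (hx₁ : x ≤ 1) :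
    #{f : α → β | ∃ b, (#{i | f i = b} : ℝ) < t} * x ^ t
      ≤ Fintype.card β * (Fintype.card β - 1 + x) ^ Fintype.card α := by
  have hunion : ({f : α → β | ∃ b, (#{i | f i = b} : ℝ) < t} : Finset _)
      = univ.biUnion fun b => {f : α → β | (#{i | f i = b} : ℝ) < t} := by
    ext f; simp
  calc (#{f : α → β | ∃ b, (#{i | f i = b} : ℝ) < t} : ℝ) * x ^ t
      ≤ (∑ b : β, #{f : α → β | (#{i | f i = b} : ℝ) < t} : ℕ) * x ^ t := by
        rw [hunion]
        gcongr
        exact card_biUnion_le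
    _ = ∑ b : β, #{f : α → β | (#{i | f i = b} : ℝ) < t} * x ^ t := by
        push_cast; rw [sum_mul]
    _ ≤ ∑ _b : β, (Fintype.card β - 1 + x) ^ Fintype.card α :=
        sum_le_sum fun b _ => card_fiber_lt_mul_rpow_le b hx₀ hx₁
    _ = _ := by rw [sum_const, card_univ, nsmul_eq_mul]

theorem card_exists_fiber_lt_seven_logb_mul_le {n : ℕ} (hβ : 0 < Fintype.card β)
    (hβn : Fintype.card β ≤ n)
    (hα : 14 * Real.logb 2 n * Fintype.card β ≤ Fintype.card α) :
    #{f : α → β | ∃ b, (#{i | f i = b} : ℝ) < 7 * Real.logb 2 n} * (n : ℝ)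
      ≤ (Fintype.card β : ℝ) ^ Fintype.card α := by
  have hB : (1 : ℝ) ≤ Fintype.card β := by exact_mod_cast hβ
  have hBn : (Fintype.card β : ℝ) ≤ n := by exact_mod_cast hβn
  have hn : 1 ≤ (n : ℝ) := hB.trans hBn
  set B : ℝ := (Fintype.card β : ℝ)
  set M := Fintype.card α
  set L := Real.logb 2 n
  set bad : ℝ := (#{f : α → β | ∃ b, (#{i | f i = b} : ℝ) < 7 * L} : ℝ)
  have hchernoff : bad * ((n : ℝ) ^ 7)⁻¹ ≤ B * (B - 1 / 2) ^ M := by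
    have := card_exists_fiber_lt_mul_rpow_le (α := α) (β := β) (t := 7 * L) one_half_pos
      one_half_lt_one.le
    rwa [show (7 : ℝ) * L = (7 : ℕ) * L by norm_num, half_rpow_mul_logb_two (by linarith),
      sub_add, show (1 : ℝ) - 1 / 2 = 1 / 2 by norm_num] at this
  have htail : (B - 1 / 2) ^ M ≤ B ^ M * ((n : ℝ) ^ 9)⁻¹ :=
    calc (B - 1 / 2) ^ M ≤ B ^ M * Real.exp (-(1 / 2 * M / B)) :=
          sub_pow_le_pow_mul_exp (by linarith) (by linarith) M
      _ ≤ B ^ M * Real.exp (-(7 * L)) := by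
          gcongr
          rw [le_div_iff₀ (by linarith)]
          linarith
      _ ≤ B ^ M * ((n : ℝ) ^ 9)⁻¹ := by
          gcongr
          exact exp_neg_seven_mul_logb_two_le hn
  have hn0 : (n : ℝ) ≠ 0 := by positivity
  calc bad * n = bad * ((n : ℝ) ^ 7)⁻¹ * n ^ 8 := by field_simp
    _ ≤ B * (B ^ M * ((n : ℝ) ^ 9)⁻¹) * n ^ 8 := by
        gcongr ?_ * _
        exact hchernoff.trans (mul_le_mul_of_nonneg_left htail (by positivity))
    _ = B / n * B ^ M := by field_simp
    _ ≤ B ^ M := mul_le_of_le_one_left (by positivity) (div_le_one_of_le₀ hBn (by positivity))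

end FiberCount

theorem one_sub_le_card_filter_div_card {α : Type*} [Fintype α] [Nonempty α] (p : α → Prop)
    [DecidablePred p] {ε : ℝ} (h : (#{x | ¬p x} : ℝ) ≤ ε * Fintype.card α) :
    1 - ε ≤ (#{x | p x} : ℝ) / Fintype.card α := by
  have hsplit : (#{x | p x} : ℝ) + #{x | ¬p x} = Fintype.card α := by
    exact_mod_cast card_filter_add_card_filter_not p
  rw [le_div_iff₀ (by exact_mod_cast Fintype.card_pos)]
  linarith

/-- Inductive load-balancing step. If at least `14 log n · B` flags
(`M` of them in total) are forwarded, each independently and uniformly at random,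
to the `B = 2^(D-j-1) ≤ n` collection nodes of subtree `j+1`, then with high
probability (at least `1 - 1/n^c`) every collection node of subtree `j+1` receives
at least `7 log n` flags. Uniform independent forwarding is modeled by counting
destination assignments `f : Fin M → Fin B`. -/
theorem stmt11 :
    ∃ c : ℝ, 0 < c ∧ ∃ N : ℕ, ∀ n : ℕ, N ≤ n → ∀ B M : ℕ,
      0 < B → B ≤ n → 14 * Real.logb 2 n * B ≤ M →
        1 - 1 / (n : ℝ) ^ c ≤
          (Nat.card {f : Fin M → Fin B //
              ∀ b : Fin B, 7 * Real.logb 2 n ≤ (Nat.card {i : Fin M // f i = b} : ℝ)} : ℝ)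
            / (B : ℝ) ^ M := by
  refine ⟨1, one_pos, 0, fun n _ B M hB hBn hM => ?_⟩
  have hbad := card_exists_fiber_lt_seven_logb_mul_le (α := Fin M) (β := Fin B) (n := n)
    (by simpa) (by simpa) (by simpa)
  have : Nonempty (Fin B) := ⟨⟨0, hB⟩⟩
  simp only [Nat.card_eq_fintype_card, Fintype.card_subtype, Real.rpow_one]
  have hcard : ((B : ℝ) ^ M) = Fintype.card (Fin M → Fin B) := by simp
  rw [hcard]
  refine one_sub_le_card_filter_div_card _ ?_
  have hn : (0 : ℝ) < n := by exact_mod_cast hB.trans_le hBn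
  rw [← hcard, div_mul_eq_mul_div, le_div_iff₀ hn, one_mul]
  refine le_of_eq_of_le ?_ (by simpa only [Fintype.card_fin] using hbad)
  simp only [not_forall, not_le]
  congr!
end

section
/- If each player appears in O(log n) quorums, each quorum has O(log n) players, each gate of an m-gate circuit is assigned to a quorum in round-robin fashion (gate i to quorum i mod n), and evaluating one gate costs each participating quorum member polylog(n) messages, then each player sends at most Õ(m/n + √n) messages in total during circuit evaluation. -/
/-! Since `1 ≤ √n`, the rounding in `⌈m/n⌉ ≤ m/n + 1` is absorbed into `m/n + √n`, and one extra
factor `log n ≥ 1` absorbs the quorum-formation term, so `C = c₁ + 1` and `k = c₃ + 1` work. -/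

lemma Int.ceil_le_add_of_one_le {x s : ℝ} (hs : 1 ≤ s) : (⌈x⌉ : ℝ) ≤ x + s :=
  (Int.ceil_lt_add_one x).le.trans (by linarith)

lemma Real.one_le_logb_two {x : ℝ} (hx : 2 ≤ x) : 1 ≤ Real.logb 2 x :=
  (Real.le_logb_iff_rpow_le one_lt_two (by linarith)).mpr (by simpa using hx)

theorem ceil_mul_add_le_mul_pow_succ {c x s L : ℝ} (k : ℕ) (hc : 0 ≤ c) (hx : 0 ≤ x)
    (hs : 1 ≤ s) (hL : 1 ≤ L) :
    c * L * ⌈x⌉ * L ^ k + s * L ^ k ≤ (c + 1) * (x + s) * L ^ (k + 1) := by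
  have hs_le : s ≤ (x + s) * L :=
    (le_add_of_nonneg_left hx).trans (le_mul_of_one_le_right (by linarith) hL)
  calc c * L * ⌈x⌉ * L ^ k + s * L ^ k
      ≤ c * L * (x + s) * L ^ k + (x + s) * L * L ^ k := by
        gcongr
        exact Int.ceil_le_add_of_one_le hs
    _ = (c + 1) * (x + s) * L ^ (k + 1) := by ring

/-- If each player is in at most `c₁ log n` quorums, each quorum handles
at most `⌈m/n⌉` gates (round-robin assignment of the `m` gates to `n` quorums), each
gate costs a participating quorum member at most `(log n)^c₃` messages, and quorum
formation costs each player at most `√n (log n)^c₃` messages, then each player's total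
message cost during circuit evaluation is `Õ(m/n + √n)`. -/
theorem stmt12 (c₁ : ℝ) (c₃ : ℕ) (hc₁ : 0 < c₁) :
    ∃ C : ℝ, ∃ k : ℕ, 0 < C ∧ ∀ n m : ℕ, 2 ≤ n →
      c₁ * Real.logb 2 n * (⌈(m : ℝ) / n⌉ : ℝ) * (Real.logb 2 n) ^ c₃
          + Real.sqrt n * (Real.logb 2 n) ^ c₃
        ≤ C * ((m : ℝ) / n + Real.sqrt n) * (Real.logb 2 n) ^ k := by
  refine ⟨c₁ + 1, c₃ + 1, by linarith, fun n m hn => ?_⟩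
  have hn' : (2 : ℝ) ≤ n := by exact_mod_cast hn
  exact ceil_mul_add_le_mul_pow_succ c₃ hc₁.le (by positivity)
    (Real.one_le_sqrt.mpr (by linarith)) (Real.one_le_logb_two hn')
end
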